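/- Let f : A →+* B be an injective homomorphism of commutative rings and a ∈ A an element such that for every x ∈ A, if f a divides f x in B then a divides x in A. Let E be a projective A-module. Then: (i) the natural A-linear map E → B ⊗[A] E sending x to 1 ⊗ x is injective; and (ii) for every x ∈ E such that there exists y ∈ B ⊗[A] E with 1 ⊗ x = a • y, there exists z ∈ E with x = a • z. -/

import Mathlib

/-!
A projective module is a retract of a free module `F`, and both properties pass to retracts, so it
suffices to treat `F = ι →₀ A`. There `B ⊗[A] F ≅ ι →₀ B` and `x ↦ 1 ⊗ x` becomes coordinatewise
application of `A → B`, so injectivity and saturation can be checked one coordinate at a time.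
-/

open TensorProduct

section

variable {A : Type*} [Semiring A]

/-- The paper's `a`-saturation of `M ⊆ N`, i.e. `a • N ∩ M = a • M`, for a map `g : M → N`. -/
def LinearMap.IsSaturated {M N : Type*} [AddCommMonoid M] [Module A M] [AddCommMonoid N]
    [Module A N] (a : A) (g : M →ₗ[A] N) : Prop :=
  ∀ x, (∃ y, g x = a • y) → ∃ z, x = a • z

theorem LinearMap.IsSaturated.of_retract {M N M' N' : Type*} [AddCommMonoid M] [Module A M]
    [AddCommMonoid N] [Module A N] [AddCommMonoid M'] [Module A M'] [AddCommMonoid N']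
    [Module A N'] {a : A} {g : M →ₗ[A] N} {g' : M' →ₗ[A] N'} {s : M →ₗ[A] M'}
    {π : M' →ₗ[A] M} (hπ : π ∘ₗ s = .id) {t : N →ₗ[A] N'} (ht : t ∘ₗ g = g' ∘ₗ s)
    (h : g'.IsSaturated a) : g.IsSaturated a := by
  rintro x ⟨y, hy⟩
  obtain ⟨z, hz⟩ := h (s x) ⟨t y, by rw [← LinearMap.comp_apply, ← ht, LinearMap.comp_apply, hy,
    map_smul]⟩
  refine ⟨π z, ?_⟩
  rw [← map_smul, ← hz, ← LinearMap.comp_apply, hπ, LinearMap.id_apply]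

end

theorem Finsupp.exists_eq_smul_of_forall_dvd {ι R : Type*} [Semiring R] {a : R} {c : ι →₀ R}
    (h : ∀ i, a ∣ c i) : ∃ z : ι →₀ R, c = a • z := by
  classical
  choose d hd using h
  refine ⟨∑ i ∈ c.support, single i (d i), ?_⟩
  conv_lhs => rw [← c.sum_single]
  simp [Finsupp.sum, Finset.smul_sum, hd]

section

variable {A B : Type*} [CommSemiring A] [Semiring B] [Algebra A B] {ι : Type*} [DecidableEq ι]

theorem TensorProduct.finsuppScalarRight_one_tmul (c : ι →₀ A) :
    finsuppScalarRight A A B ι (1 ⊗ₜ c) = c.mapRange (algebraMap A B) (map_zero _) := by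
  ext i
  simp [Algebra.algebraMap_eq_smul_one]

theorem TensorProduct.mk_one_finsupp_injective (hf : Function.Injective (algebraMap A B)) :
    Function.Injective (mk A B (ι →₀ A) 1) := by
  intro c c' h
  apply Finsupp.mapRange_injective _ (map_zero _) hf
  simpa only [mk_apply, ← finsuppScalarRight_one_tmul] using
    congrArg (finsuppScalarRight A A B ι) h

theorem TensorProduct.mk_one_finsupp_isSaturated {a : A}
    (hsat : ∀ x : A, algebraMap A B a ∣ algebraMap A B x → a ∣ x) :
    (mk A B (ι →₀ A) 1).IsSaturated a := by
  rintro c ⟨y, hy⟩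
  refine Finsupp.exists_eq_smul_of_forall_dvd fun i ↦ hsat _ ⟨finsuppScalarRight A A B ι y i, ?_⟩
  calc algebraMap A B (c i) = finsuppScalarRight A A B ι (1 ⊗ₜ c) i := by
        rw [finsuppScalarRight_one_tmul, Finsupp.mapRange_apply]
    _ = finsuppScalarRight A A B ι (a • y) i := by rw [← hy, mk_apply]
    _ = algebraMap A B a * finsuppScalarRight A A B ι y i := by
        rw [map_smul, Finsupp.smul_apply, _root_.Algebra.smul_def]

end

/-- Step in the proof of Proposition 4.1: if `A ⊆ B` is an `a`-saturated injection of commutative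
rings (i.e. `aB ∩ A = aA`) and `E` is a projective `A`-module, then `E → B ⊗[A] E` is injective
and `a`-saturated. -/
theorem injective_and_saturated_baseChange
    {A B : Type*} [CommRing A] [CommRing B] (f : A →+* B)
    (hf : Function.Injective f) (a : A) (hsat : ∀ x : A, f a ∣ f x → a ∣ x)
    (E : Type*) [AddCommGroup E] [Module A E] [Module.Projective A E] :
    letI := f.toAlgebra
    Function.Injective (fun x : E => (1 : B) ⊗ₜ[A] x) ∧
      ∀ x : E, (∃ y : B ⊗[A] E, (1 : B) ⊗ₜ[A] x = a • y) → ∃ z : E, x = a • z := by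
  classical
  let _ := f.toAlgebra
  obtain ⟨s, hs⟩ := Module.projective_def'.mp ‹Module.Projective A E›
  have hsq : s.lTensor B ∘ₗ mk A B E 1 = mk A B (E →₀ A) 1 ∘ₗ s := by
    ext x
    rfl
  have hs_inj : Function.Injective s := Function.LeftInverse.injective
    (g := Finsupp.linearCombination A id) (LinearMap.congr_fun hs)
  have hfree : Function.Injective (mk A B (E →₀ A) 1 ∘ₗ s) :=
    (mk_one_finsupp_injective hf).comp hs_inj
  rw [← hsq, LinearMap.coe_comp] at hfree
  exact ⟨hfree.of_comp, (mk_one_finsupp_isSaturated hsat).of_retract hs hsq⟩
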